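/- The 2-abelian complexity of the Thue–Morse word is a concatenation of palindromes of increasing length: for every q ≥ 1 and every i with 0 ≤ i ≤ 2^{q−1}, P(2^q + 1 + i) = P(2^{q+1} + 1 − i); i.e., the finite sequence P(2^q+1), P(2^q+2), …, P(2^{q+1}+1) is a palindrome. -/

import Mathlib

/-- The Thue–Morse sequence: sum of binary digits of `n`, mod 2. -/
def tm (n : ℕ) : Fin 2 := (Fin.ofNat 2 (Nat.digits 2 n).sum)

/-- The factor of the Thue–Morse word of length `n` starting at position `i`. -/
def tmWord (i n : ℕ) : List (Fin 2) := (List.range n).map (fun j => tm (i + j))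

/-- A binary word is a factor of the Thue–Morse word. -/
def IsFactor (w : List (Fin 2)) : Prop := ∃ i : ℕ, w = tmWord i w.length

/-- Number of occurrences of the word `x` as a factor of `u`. -/
def occCount (u x : List (Fin 2)) : ℕ :=
  ((List.range u.length).filter (fun i => (u.drop i).take x.length = x)).length

/-- Two binary words (of equal length) are 2-abelian equivalent: same first letter,
same last letter, and the same number of occurrences of every word of length 2. -/
def TwoAbelianEquiv (u v : List (Fin 2)) : Prop :=
  u.length = v.length ∧ u.take 1 = v.take 1 ∧
  u.drop (u.length - 1) = v.drop (v.length - 1) ∧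
  ∀ x : List (Fin 2), x.length = 2 → occCount u x = occCount v x

/-- `P n` is the 2-abelian complexity of the Thue–Morse word: the number of
2-abelian equivalence classes of factors of length `n`. -/
noncomputable def P (n : ℕ) : ℕ :=
  Nat.card (Quot (fun u v : {w : List (Fin 2) // w.length = n ∧ IsFactor w} =>
    TwoAbelianEquiv u.1 v.1))

/-- `pword w` counts the pairs in `w`: the total number of occurrences of `00` and `11`. -/
def pword (w : List (Fin 2)) : ℕ := occCount w [0, 0] + occCount w [1, 1]

/-- The set of possible pair counts of Thue–Morse factors of length `n`. -/
def pairs (n : ℕ) : Set ℕ :=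
  { m | ∃ w : List (Fin 2), w.length = n ∧ IsFactor w ∧ pword w = m }

/-- The set of possible pair counts of Thue–Morse factors of length `n`
occurring at some odd position (pure odd factors). -/
def PAIRS (n : ℕ) : Set ℕ := { m | ∃ i : ℕ, i % 2 = 1 ∧ pword (tmWord i n) = m }

/-
The 2-abelian class of a factor with `m` adjacent pairs (length `m + 1`) is determined by its
first letter, last letter and its four pair counts, so `P (m + 1)` is the number of such data
vectors. Since `t (2n) = t n` and `t (2n + 1) = 1 - t n`, the data of the factors with `2m` or
`2m + 1` pairs are affine images of those with `m` or `m + 1` pairs, by one of four maps chosen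
by the parities of the start and of the number of pairs. The set of data is closed under
complementing the letters, and for `K = 2 ^ p` the affine involution `reflect K` intertwines the
four maps at scale `K` with those at scale `2K`, up to complementation. By induction on `p` the
data with `4K - i` pairs are then the reflection of those with `2K + i` pairs; the base case
`K = 1` is a finite computation.
-/

namespace ThueMorse

open Finset

lemma tm_two_mul (n : ℕ) : tm (2 * n) = tm n := by
  rcases Nat.eq_zero_or_pos n with rfl | hn
  · rfl
  · rw [tm, tm, Nat.digits_def' (by norm_num) (by omega)]
    simp

lemma tm_two_mul_add_one (n : ℕ) : tm (2 * n + 1) = 1 + tm n := by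
  rw [tm, tm, Nat.digits_def' (by norm_num) (by omega)]
  ext
  simp [Fin.val_add, Nat.add_mod, Nat.mul_add_div]

lemma tm_two_pow_add {k n : ℕ} (h : n < 2 ^ k) : tm (2 ^ k + n) = 1 + tm n := by
  induction k generalizing n with
  | zero =>
    obtain rfl : n = 0 := by omega
    rfl
  | succ k ih =>
    obtain ⟨r, rfl | rfl⟩ : ∃ r, n = 2 * r ∨ n = 2 * r + 1 := ⟨n / 2, by omega⟩
    · rw [pow_succ', ← mul_add, tm_two_mul, tm_two_mul, ih (by omega)]
    · rw [pow_succ', ← add_assoc, ← mul_add, tm_two_mul_add_one, tm_two_mul_add_one,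
        ih (by omega)]

lemma sum_range_two_mul {M : Type*} [AddCommMonoid M] (f : ℕ → M) (m : ℕ) :
    ∑ k ∈ range (2 * m), f k = ∑ r ∈ range m, (f (2 * r) + f (2 * r + 1)) := by
  induction m with
  | zero => simp
  | succ m ih =>
    rw [mul_add, mul_one, sum_range_succ, sum_range_succ, sum_range_succ, ih, add_assoc]

/-- The sum of the weights `F a b` over the `m` adjacent pairs `ab` of the factor of length
`m + 1` starting at `j`. -/
def pairSum (F : Fin 2 → Fin 2 → ℤ) (j m : ℕ) : ℤ :=
  ∑ k ∈ range m, F (tm (j + k)) (tm (j + k + 1))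

def pairCount (x y : Fin 2) (j m : ℕ) : ℤ :=
  pairSum (fun a b => if a = x ∧ b = y then 1 else 0) j m

lemma pairSum_eq_pairCount (F : Fin 2 → Fin 2 → ℤ) (j m : ℕ) :
    pairSum F j m = F 0 0 * pairCount 0 0 j m + F 0 1 * pairCount 0 1 j m
      + F 1 0 * pairCount 1 0 j m + F 1 1 * pairCount 1 1 j m := by
  simp only [pairCount, pairSum, mul_sum, ← sum_add_distrib]
  refine sum_congr rfl fun k _ => ?_
  generalize tm (j + k) = a
  generalize tm (j + k + 1) = b
  fin_cases a <;> fin_cases b <;> simp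

lemma pairSum_succ (F : Fin 2 → Fin 2 → ℤ) (j m : ℕ) :
    pairSum F j (m + 1) = pairSum F j m + F (tm (j + m)) (tm (j + m + 1)) :=
  sum_range_succ _ _

lemma pairSum_one (F : Fin 2 → Fin 2 → ℤ) (j : ℕ) :
    pairSum F j 1 = F (tm j) (tm (j + 1)) := by
  simp [pairSum]

lemma pairSum_two_mul (F : Fin 2 → Fin 2 → ℤ) (i m : ℕ) :
    pairSum F (2 * i) (2 * m)
      = pairSum (fun a _ => F a (1 + a)) i m + pairSum (fun a b => F (1 + a) b) i m := by
  simp only [pairSum, sum_range_two_mul, sum_add_distrib]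
  congr 1 <;> refine sum_congr rfl fun r _ => ?_
  · rw [show 2 * i + 2 * r = 2 * (i + r) by ring, tm_two_mul, tm_two_mul_add_one]
  · rw [show 2 * i + (2 * r + 1) = 2 * (i + r) + 1 by ring,
      show 2 * (i + r) + 1 + 1 = 2 * (i + r + 1) by ring, tm_two_mul, tm_two_mul_add_one]

lemma pairSum_two_mul_add_one (F : Fin 2 → Fin 2 → ℤ) (i m : ℕ) :
    pairSum F (2 * i + 1) (2 * m)
      = pairSum (fun a b => F (1 + a) b) i m + pairSum (fun _ b => F b (1 + b)) i m := by
  simp only [pairSum, sum_range_two_mul, sum_add_distrib]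
  congr 1 <;> refine sum_congr rfl fun r _ => ?_
  · rw [show 2 * i + 1 + 2 * r = 2 * (i + r) + 1 by ring,
      show 2 * (i + r) + 1 + 1 = 2 * (i + r + 1) by ring, tm_two_mul, tm_two_mul_add_one]
  · rw [show 2 * i + 1 + (2 * r + 1) = 2 * (i + r + 1) by ring, tm_two_mul, tm_two_mul_add_one]

lemma pairSum_two_pow_add (F : Fin 2 → Fin 2 → ℤ) {k j m : ℕ} (h : j + m < 2 ^ k) :
    pairSum F (2 ^ k + j) m = pairSum (fun a b => F (1 + a) (1 + b)) j m := by
  refine sum_congr rfl fun r hr => ?_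
  rw [mem_range] at hr
  rw [add_assoc, add_assoc, tm_two_pow_add (by omega), tm_two_pow_add (by omega), add_assoc]

lemma pairSum_two_mul_succ (F : Fin 2 → Fin 2 → ℤ) (i m : ℕ) :
    pairSum F (2 * i) (2 * m + 1)
      = pairSum (fun a _ => F a (1 + a)) i m + pairSum (fun a b => F (1 + a) b) i m
        + F (tm (i + m)) (1 + tm (i + m)) := by
  rw [pairSum_succ, pairSum_two_mul, ← mul_add, tm_two_mul, tm_two_mul_add_one]

lemma pairSum_two_mul_add_one_succ (F : Fin 2 → Fin 2 → ℤ) (i m : ℕ) :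
    pairSum F (2 * i + 1) (2 * m + 1)
      = pairSum (fun a b => F (1 + a) b) i (m + 1) + pairSum (fun _ b => F b (1 + b)) i (m + 1)
        - F (tm (i + m + 1)) (1 + tm (i + m + 1)) := by
  rw [pairSum_succ, pairSum_two_mul_add_one, pairSum_succ, pairSum_succ,
    show 2 * i + 1 + 2 * m = 2 * (i + m) + 1 by ring,
    show 2 * (i + m) + 1 + 1 = 2 * (i + m + 1) by ring, tm_two_mul, tm_two_mul_add_one]
  ring

/-- First letter, last letter, and the numbers of occurrences of `00`, `01`, `10`, `11`. -/
abbrev Data := Fin 2 × Fin 2 × ℤ × ℤ × ℤ × ℤ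

def pairData (j m : ℕ) : Data :=
  (tm j, tm (j + m), pairCount 0 0 j m, pairCount 0 1 j m, pairCount 1 0 j m, pairCount 1 1 j m)

def factorData (m : ℕ) : Set Data := Set.range (pairData · m)

-- `evenOdd` describes the factors starting at an even position with an odd number of pairs,
-- and so on.
def evenEven : Data → Data
  | (x, y, a, b, c, d) => (x, y, c, a + b + d, a + c + d, b)

def oddEven : Data → Data
  | (x, y, a, b, c, d) => (1 + x, 1 + y, c, a + c + d, a + b + d, b)

def evenOdd : Data → Data
  | (x, y, a, b, c, d) =>
    (x, 1 + y, c, a + b + d + if y = 0 then 1 else 0, a + c + d + if y = 1 then 1 else 0, b)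

def oddOdd : Data → Data
  | (x, y, a, b, c, d) =>
    (1 + x, y, c, a + c + d - if y = 0 then 1 else 0, a + b + d - if y = 1 then 1 else 0, b)

lemma pairData_two_mul (i m : ℕ) : pairData (2 * i) (2 * m) = evenEven (pairData i m) := by
  have key (x y : Fin 2) : pairCount x y (2 * i) (2 * m) = _ := pairSum_two_mul _ i m
  simp [pairData, evenEven, key, pairSum_eq_pairCount, ← mul_add, tm_two_mul]
  omega

lemma pairData_two_mul_add_one (i m : ℕ) :
    pairData (2 * i + 1) (2 * m) = oddEven (pairData i m) := by
  have key (x y : Fin 2) : pairCount x y (2 * i + 1) (2 * m) = _ := pairSum_two_mul_add_one _ i m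
  simp [pairData, oddEven, key, pairSum_eq_pairCount, tm_two_mul_add_one,
    show 2 * i + 1 + 2 * m = 2 * (i + m) + 1 by ring]
  omega

lemma pairData_two_mul_succ (i m : ℕ) :
    pairData (2 * i) (2 * m + 1) = evenOdd (pairData i m) := by
  have key (x y : Fin 2) : pairCount x y (2 * i) (2 * m + 1) = _ := pairSum_two_mul_succ _ i m
  simp only [pairData, evenOdd, key, show 2 * i + (2 * m + 1) = 2 * (i + m) + 1 by ring,
    tm_two_mul, tm_two_mul_add_one]
  obtain hy | hy : tm (i + m) = 0 ∨ tm (i + m) = 1 := by omega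
  all_goals simp [hy, pairSum_eq_pairCount]; omega

lemma pairData_two_mul_add_one_succ (i m : ℕ) :
    pairData (2 * i + 1) (2 * m + 1) = oddOdd (pairData i (m + 1)) := by
  have key (x y : Fin 2) : pairCount x y (2 * i + 1) (2 * m + 1) = _ :=
    pairSum_two_mul_add_one_succ _ i m
  simp only [pairData, oddOdd, key, tm_two_mul_add_one, ← add_assoc,
    show 2 * i + 1 + 2 * m + 1 = 2 * (i + m + 1) by ring, tm_two_mul]
  obtain hy | hy : tm (i + m + 1) = 0 ∨ tm (i + m + 1) = 1 := by omega
  all_goals simp [hy, pairSum_eq_pairCount]; omega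

def complement : Data → Data
  | (x, y, a, b, c, d) => (1 + x, 1 + y, d, c, b, a)

def reflect (K : ℕ) : Data → Data
  | (x, y, a, b, c, d) => (x, y, K - a, 2 * K - c, 2 * K - b, K - d)

lemma one_add_one_add (u : Fin 2) : 1 + (1 + u) = u := by omega

lemma pairData_two_pow_add (j m : ℕ) :
    pairData (2 ^ (j + m + 1) + j) m = complement (pairData j m) := by
  have hlt : j + m < 2 ^ (j + m + 1) := (Nat.lt_succ_self _).trans Nat.lt_two_pow_self
  have key (x y : Fin 2) : pairCount x y (2 ^ (j + m + 1) + j) m = _ :=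
    pairSum_two_pow_add _ hlt
  have hlast : tm (2 ^ (j + m + 1) + j + m) = 1 + tm (j + m) := by
    rw [add_assoc, tm_two_pow_add hlt]
  simp only [pairData, complement, key, hlast, tm_two_pow_add (show j < 2 ^ (j + m + 1) by omega)]
  simp [pairSum_eq_pairCount]

lemma complement_involutive : Function.Involutive complement := by
  rintro ⟨x, y, a, b, c, d⟩
  simp [complement, one_add_one_add]

lemma reflect_involutive (K : ℕ) : Function.Involutive (reflect K) := by
  rintro ⟨x, y, a, b, c, d⟩
  simp [reflect]

lemma evenEven_reflect_complement (K : ℕ) (t : Data) :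
    evenEven (reflect K (complement t)) = reflect (2 * K) (oddEven t) := by
  obtain ⟨x, y, a, b, c, d⟩ := t
  simp only [evenEven, oddEven, reflect, complement, Prod.mk.injEq, true_and]
  push_cast
  and_intros <;> ring

lemma oddEven_reflect_complement (K : ℕ) (t : Data) :
    oddEven (reflect K (complement t)) = reflect (2 * K) (evenEven t) := by
  obtain ⟨x, y, a, b, c, d⟩ := t
  simp only [evenEven, oddEven, reflect, complement, Prod.mk.injEq, one_add_one_add, true_and]
  push_cast
  and_intros <;> ring

lemma evenOdd_reflect_complement (K : ℕ) (t : Data) :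
    evenOdd (reflect K (complement t)) = reflect (2 * K) (oddOdd t) := by
  obtain ⟨x, y, a, b, c, d⟩ := t
  obtain rfl | rfl : y = 0 ∨ y = 1 := by omega
  all_goals
    simp [evenOdd, oddOdd, reflect, complement]
    and_intros <;> ring

lemma oddOdd_reflect_complement (K : ℕ) (t : Data) :
    oddOdd (reflect K (complement t)) = reflect (2 * K) (evenOdd t) := by
  obtain ⟨x, y, a, b, c, d⟩ := t
  obtain rfl | rfl : y = 0 ∨ y = 1 := by omega
  all_goals
    simp [evenOdd, oddOdd, reflect, complement, one_add_one_add]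
    and_intros <;> ring

lemma range_eq_range_two_mul_union {α : Type*} (f : ℕ → α) :
    Set.range f = Set.range (fun i => f (2 * i)) ∪ Set.range (fun i => f (2 * i + 1)) := by
  refine subset_antisymm ?_ (Set.union_subset (Set.range_comp_subset_range _ f)
    (Set.range_comp_subset_range _ f))
  rintro _ ⟨j, rfl⟩
  obtain ⟨i, rfl | rfl⟩ := Nat.even_or_odd' j
  exacts [Or.inl ⟨i, rfl⟩, Or.inr ⟨i, rfl⟩]

lemma factorData_two_mul (m : ℕ) :
    factorData (2 * m) = evenEven '' factorData m ∪ oddEven '' factorData m := by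
  simp only [factorData, ← Set.range_comp]
  rw [range_eq_range_two_mul_union]
  simp only [pairData_two_mul, pairData_two_mul_add_one]
  rfl

lemma factorData_two_mul_add_one (m : ℕ) :
    factorData (2 * m + 1) = evenOdd '' factorData m ∪ oddOdd '' factorData (m + 1) := by
  simp only [factorData, ← Set.range_comp]
  rw [range_eq_range_two_mul_union]
  simp only [pairData_two_mul_succ, pairData_two_mul_add_one_succ]
  rfl

lemma complement_image_factorData (m : ℕ) : complement '' factorData m = factorData m := by
  have hsub : complement '' factorData m ⊆ factorData m := by
    rintro _ ⟨_, ⟨j, rfl⟩, rfl⟩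
    exact ⟨_, pairData_two_pow_add j m⟩
  refine subset_antisymm hsub fun t ht => ⟨complement t, hsub ⟨t, ht, rfl⟩, ?_⟩
  exact complement_involutive t

lemma image_reflect_of_intertwine {A B : Data → Data} {K : ℕ} {S : Set Data}
    (hS : complement '' S = S) (h : ∀ t, A (reflect K (complement t)) = reflect (2 * K) (B t)) :
    A '' (reflect K '' S) = reflect (2 * K) '' (B '' S) := by
  nth_rw 1 [← hS]
  simp only [Set.image_image, h]

def factorDataOne : Finset Data :=
  {(0, 1, 0, 1, 0, 0), (1, 1, 0, 0, 0, 1), (1, 0, 0, 0, 1, 0), (0, 0, 1, 0, 0, 0)}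

lemma factorData_one : factorData 1 = factorDataOne := by
  apply subset_antisymm
  · rintro _ ⟨j, rfl⟩
    obtain h | h : tm j = 0 ∨ tm j = 1 := by omega
    all_goals obtain h' | h' : tm (j + 1) = 0 ∨ tm (j + 1) = 1 := by omega
    all_goals simp [factorDataOne, pairData, pairCount, pairSum_one, h, h']
  · intro t ht
    simp only [factorDataOne, Finset.coe_insert, Finset.coe_singleton, Set.mem_insert_iff,
      Set.mem_singleton_iff] at ht
    rcases ht with rfl | rfl | rfl | rfl
    exacts [⟨0, by decide⟩, ⟨1, by decide⟩, ⟨2, by decide⟩, ⟨5, by decide⟩]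

lemma factorData_two :
    factorData 2 = ↑(factorDataOne.image evenEven ∪ factorDataOne.image oddEven) :=
  (factorData_two_mul 1).trans (by rw [factorData_one]; push_cast; rfl)

lemma factorData_four_eq_reflect : factorData 4 = reflect 1 '' factorData 2 := by
  rw [(factorData_two_mul 2 : factorData 4 = _), factorData_two]
  simp only [← Finset.coe_image, ← Finset.coe_union, Finset.coe_inj]
  decide

lemma factorData_three_eq_reflect : factorData 3 = reflect 1 '' factorData 3 := by
  rw [(factorData_two_mul_add_one 1 : factorData 3 = _), factorData_two, factorData_one]
  simp only [← Finset.coe_image, ← Finset.coe_union, Finset.coe_inj]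
  decide

theorem factorData_palindrome (p i : ℕ) (hi : i ≤ 2 ^ p) :
    factorData (4 * 2 ^ p - i) = reflect (2 ^ p) '' factorData (2 * 2 ^ p + i) := by
  induction p generalizing i with
  | zero =>
    obtain rfl | rfl : i = 0 ∨ i = 1 := by omega
    · simpa using factorData_four_eq_reflect
    · simpa using factorData_three_eq_reflect
  | succ p ih =>
    set K := 2 ^ p
    have hK : 2 ^ (p + 1) = 2 * K := pow_succ' 2 p
    rw [hK] at hi ⊢
    obtain ⟨s, rfl | rfl⟩ := Nat.even_or_odd' i
    · rw [show 4 * (2 * K) - 2 * s = 2 * (4 * K - s) by omega,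
        show 2 * (2 * K) + 2 * s = 2 * (2 * K + s) by omega, factorData_two_mul,
        factorData_two_mul, ih s (by omega),
        image_reflect_of_intertwine (complement_image_factorData _) (evenEven_reflect_complement K),
        image_reflect_of_intertwine (complement_image_factorData _) (oddEven_reflect_complement K),
        Set.image_union, Set.union_comm]
    · rw [show 4 * (2 * K) - (2 * s + 1) = 2 * (4 * K - (s + 1)) + 1 by omega,
        show 2 * (2 * K) + (2 * s + 1) = 2 * (2 * K + s) + 1 by omega,
        factorData_two_mul_add_one, factorData_two_mul_add_one,
        show 4 * K - (s + 1) + 1 = 4 * K - s by omega, ih s (by omega), ih (s + 1) (by omega),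
        image_reflect_of_intertwine (complement_image_factorData _) (evenOdd_reflect_complement K),
        image_reflect_of_intertwine (complement_image_factorData _) (oddOdd_reflect_complement K),
        Set.image_union, Set.union_comm, add_assoc]

lemma length_tmWord (j n : ℕ) : (tmWord j n).length = n := by simp [tmWord]

lemma drop_tmWord (j n k : ℕ) : (tmWord j n).drop k = tmWord (j + k) (n - k) := by
  apply List.ext_getElem <;> simp [tmWord, add_assoc]

lemma take_tmWord (j n k : ℕ) : (tmWord j n).take k = tmWord j (min k n) := by
  simp [tmWord, ← List.map_take, List.take_range]

lemma pairCount_eq_card (x y : Fin 2) (j m : ℕ) :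
    pairCount x y j m = #{k ∈ range m | tm (j + k) = x ∧ tm (j + k + 1) = y} := by
  simp [pairCount, pairSum]

lemma occCount_tmWord (x y : Fin 2) (j m : ℕ) :
    (occCount (tmWord j (m + 1)) [x, y] : ℤ) = pairCount x y j m := by
  have window (k : ℕ) : ((tmWord j (m + 1)).drop k).take [x, y].length
      = tmWord (j + k) (min 2 (m + 1 - k)) := by
    rw [drop_tmWord, take_tmWord]; rfl
  simp only [occCount, length_tmWord, List.range_succ, List.filter_append, List.length_append,
    window]
  have hlast : ¬ tmWord (j + m) (min 2 (m + 1 - m)) = [x, y] := by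
    intro h; simpa [tmWord] using congrArg List.length h
  have hpair (k : ℕ) (hk : k < m) :
      tmWord (j + k) (min 2 (m + 1 - k)) = [tm (j + k), tm (j + k + 1)] := by
    rw [show min 2 (m + 1 - k) = 2 by omega]; simp [tmWord, List.range_succ, add_assoc]
  rw [pairCount_eq_card, List.filter_singleton, decide_eq_false hlast]
  norm_cast
  rw [Finset.card_def, Finset.filter_val, Finset.range_val, Multiset.range, Multiset.filter_coe,
    Multiset.coe_card]
  simp only [cond_false, List.length_nil, add_zero]
  congr 1
  refine List.filter_congr fun k hk => ?_
  simp [hpair k (List.mem_range.1 hk)]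

def wordData (w : List (Fin 2)) : Data :=
  (w.headI, w.getLastI, occCount w [0, 0], occCount w [0, 1], occCount w [1, 0], occCount w [1, 1])

lemma wordData_tmWord (j m : ℕ) : wordData (tmWord j (m + 1)) = pairData j m := by
  have hne : tmWord j (m + 1) ≠ [] := by simp [tmWord]
  simp only [wordData, pairData, occCount_tmWord, Prod.mk.injEq, and_true]
  constructor
  · simp [tmWord, List.range_succ_eq_map]
  · rw [List.getLastI_eq_getLast?_getD, List.getLast?_eq_some_getLast hne]
    simp [tmWord, List.getLast_map, List.getLast_range]

lemma take_one_eq_take_one_iff {α : Type*} [Inhabited α] {u v : List α} (hu : u ≠ [])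
    (hv : v ≠ []) : u.take 1 = v.take 1 ↔ u.headI = v.headI := by
  obtain ⟨a, u, rfl⟩ := List.exists_cons_of_ne_nil hu
  obtain ⟨b, v, rfl⟩ := List.exists_cons_of_ne_nil hv
  simp

lemma drop_length_sub_one_eq_iff {α : Type*} [Inhabited α] {u v : List α} (hu : u ≠ [])
    (hv : v ≠ []) :
    u.drop (u.length - 1) = v.drop (v.length - 1) ↔ u.getLastI = v.getLastI := by
  simp [List.drop_length_sub_one hu, List.drop_length_sub_one hv, List.getLastI_eq_getLast?_getD,
    List.getLast?_eq_some_getLast hu, List.getLast?_eq_some_getLast hv]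

lemma twoAbelianEquiv_iff {u v : List (Fin 2)} (h : u.length = v.length) (hu : u ≠ []) :
    TwoAbelianEquiv u v ↔ wordData u = wordData v := by
  have hv : v ≠ [] := by rw [← List.length_pos_iff, ← h]; exact List.length_pos_iff.2 hu
  rw [TwoAbelianEquiv, take_one_eq_take_one_iff hu hv, drop_length_sub_one_eq_iff hu hv]
  simp only [wordData, Prod.mk.injEq, h, true_and, Nat.cast_inj]
  refine and_congr_right fun _ => and_congr_right fun _ => ⟨fun H => ?_, fun H w hw => ?_⟩
  · exact ⟨H _ rfl, H _ rfl, H _ rfl, H _ rfl⟩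
  · obtain ⟨a, b, rfl⟩ := List.length_eq_two.1 hw
    obtain rfl | rfl : a = 0 ∨ a = 1 := by omega
    all_goals obtain rfl | rfl : b = 0 ∨ b = 1 := by omega
    exacts [H.1, H.2.1, H.2.2.1, H.2.2.2]

theorem P_succ (m : ℕ) : P (m + 1) = (factorData m).ncard := by
  set S := {w : List (Fin 2) // w.length = m + 1 ∧ IsFactor w}
  let f : S → Data := fun u => wordData u.1
  have hrel : (fun u v : S => TwoAbelianEquiv u.1 v.1) = fun u v => f u = f v := by
    funext u v
    exact propext (twoAbelianEquiv_iff (u.2.1.trans v.2.1.symm)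
      (List.ne_nil_of_length_eq_add_one u.2.1))
  have hrange : Set.range f = factorData m := by
    apply subset_antisymm
    · rintro _ ⟨⟨w, hw, i, hi⟩, rfl⟩
      rw [hw] at hi
      exact ⟨i, by simp [f, hi, wordData_tmWord]⟩
    · rintro _ ⟨i, rfl⟩
      refine ⟨⟨tmWord i (m + 1), length_tmWord i _, i, by rw [length_tmWord]⟩, ?_⟩
      exact wordData_tmWord i m
  rw [P, hrel, ← hrange, ← Nat.card_coe_set_eq]
  exact Nat.card_congr (Setoid.quotientKerEquivRange f)

end ThueMorse

theorem thueMorse_P_palindromes (q i : ℕ) (hq : 1 ≤ q) (hi : i ≤ 2 ^ (q - 1)) :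
    P (2 ^ q + 1 + i) = P (2 ^ (q + 1) + 1 - i) := by
  obtain ⟨p, rfl⟩ : ∃ p, q = p + 1 := ⟨q - 1, by omega⟩
  rw [Nat.add_sub_cancel] at hi
  have hp : 2 ^ (p + 1) = 2 * 2 ^ p := pow_succ' 2 p
  have hp' : 2 ^ (p + 1 + 1) = 4 * 2 ^ p := by rw [pow_succ, hp]; ring
  rw [show 2 ^ (p + 1) + 1 + i = 2 * 2 ^ p + i + 1 by omega,
    show 2 ^ (p + 1 + 1) + 1 - i = 4 * 2 ^ p - i + 1 by omega, ThueMorse.P_succ,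
    ThueMorse.P_succ, ThueMorse.factorData_palindrome p i hi,
    Set.ncard_image_of_injective _ (ThueMorse.reflect_involutive _).injective]
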